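/- Let n ≥ 2 be an integer, ε_n = e^{2πi/n}, let C : ℤ → ℂ be an n-periodic sequence, let r, p ∈ ℤ, q ∈ ℂ, and λ ∈ ℂ with λ^n ≠ 1. Let G_n^{r,p}(q,λ,t;C) := Σ_{m=0}^∞ E_{m+1,n}^{r,p}(q,λ;C) t^m/m! ∈ ℂ[[t]]. Then t · G_n^{r,p}(q,λ,t;C) · e^{(n-1)qt} = Σ_{m=1}^∞ m · E_{m,n}^{r,p}(nq,λ;C) · t^m/m! in ℂ[[t]]. -/

import Mathlib

open Finset

/-- `eps n = e^{2πi/n}`, a primitive `n`-th root of unity in `ℂ`. -/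
noncomputable def eps (n : ℕ) : ℂ := Complex.exp (2 * Real.pi * Complex.I / n)

/-- `expPS q = e^{qt} = Σ_j q^j t^j / j!` as a formal power series in `ℂ[[t]]`. -/
noncomputable def expPS (q : ℂ) : PowerSeries ℂ :=
  PowerSeries.mk fun j => q ^ j / j.factorial

/-- The Dedekind sum
`E_{m,n}^{r,p}(q,λ;C) = Σ_{k=1}^{n-1} ε_n^{-kr} H_{m-1}^{(p)}(q,λ,ε_n^{-k}) C_{-k} / (1-ε_n^k)^p`,
where `H p m q λ γ` denotes the generalized Frobenius–Euler polynomial `H_m^{(p)}(q,λ,γ)`. -/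
noncomputable def dedekindE (H : ℤ → ℕ → ℂ → ℂ → ℂ → ℂ) (n m : ℕ) (r p : ℤ)
    (q lam : ℂ) (Cf : ℤ → ℂ) : ℂ :=
  ∑ k ∈ Finset.Ico 1 n,
    eps n ^ (-(k : ℤ) * r) * H p (m - 1) q lam (eps n ^ (-(k : ℤ))) * Cf (-(k : ℤ))
      / (1 - eps n ^ (k : ℤ)) ^ p

lemma expPS_eq_rescale (q : ℂ) : expPS q = PowerSeries.rescale q (PowerSeries.exp ℂ) := by
  ext m
  rw [PowerSeries.coeff_rescale, PowerSeries.coeff_exp]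
  simp [expPS, div_eq_mul_inv]

lemma expPS_add (a b : ℂ) : expPS a * expPS b = expPS (a + b) := by
  simp only [expPS_eq_rescale]
  exact PowerSeries.exp_mul_exp_eq_exp_add a b

lemma shiftH (H : ℤ → ℕ → ℂ → ℂ → ℂ → ℂ)
    (hH : ∀ (p : ℤ) (q lam γ : ℂ), γ ≠ 1 → lam ≠ γ →
      (PowerSeries.C lam * expPS 1 - PowerSeries.C γ) *
          PowerSeries.mk (fun m => H p m q lam γ / m.factorial)
        = PowerSeries.C ((1 - γ) ^ p) * expPS q)
    (p : ℤ) (q x lam γ : ℂ) (hγ : γ ≠ 1) (hlg : lam ≠ γ) :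
    PowerSeries.mk (fun m => H p m q lam γ / m.factorial) * expPS x
      = PowerSeries.mk (fun m => H p m (q + x) lam γ / m.factorial) := by
  have hA : (PowerSeries.C lam * expPS 1 - PowerSeries.C γ) ≠ 0 := by
    intro h
    have h0 := congrArg (PowerSeries.constantCoeff) h
    simp only [map_sub, map_mul, PowerSeries.constantCoeff_C, expPS,
      PowerSeries.constantCoeff_mk, map_zero] at h0
    norm_num at h0
    exact hlg (sub_eq_zero.mp h0)
  apply mul_left_cancel₀ hA
  rw [← mul_assoc, hH p q lam γ hγ hlg, hH p (q + x) lam γ hγ hlg,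
    mul_assoc, expPS_add]

/-- With `G_n^{r,p}(q,λ,t;C) = Σ_{m≥0} E_{m+1,n}^{r,p}(q,λ;C) t^m/m!` one has
`t · G_n^{r,p}(q,λ,t;C) · e^{(n-1)qt} = Σ_{m≥1} m · E_{m,n}^{r,p}(nq,λ;C) t^m/m!` in `ℂ[[t]]`. -/
theorem dedekindE_generating_function_rescaled
    (n : ℕ) (hn : 2 ≤ n) (Cf : ℤ → ℂ) (hCper : ∀ k : ℤ, Cf (k + n) = Cf k)
    (H : ℤ → ℕ → ℂ → ℂ → ℂ → ℂ)
    (hH : ∀ (p : ℤ) (q lam γ : ℂ), γ ≠ 1 → lam ≠ γ →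
      (PowerSeries.C lam * expPS 1 - PowerSeries.C γ) *
          PowerSeries.mk (fun m => H p m q lam γ / m.factorial)
        = PowerSeries.C ((1 - γ) ^ p) * expPS q)
    (r p : ℤ) (q lam : ℂ) (hlam : lam ^ n ≠ 1)
    (G : PowerSeries ℂ)
    (hG : G = PowerSeries.mk (fun m => dedekindE H n (m + 1) r p q lam Cf / m.factorial)) :
    PowerSeries.X * G * expPS (((n : ℂ) - 1) * q)
      = PowerSeries.mk
          (fun m => (m : ℂ) * dedekindE H n m r p ((n : ℂ) * q) lam Cf / m.factorial) := by
  have hn0 : (n : ℕ) ≠ 0 := by omega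
  have hprim : IsPrimitiveRoot (eps n) n := by
    simpa [eps] using Complex.isPrimitiveRoot_exp n hn0
  -- facts about γ_k = eps n ^ (-k)
  have hγne1 : ∀ k ∈ Finset.Ico 1 n, eps n ^ (-(k : ℤ)) ≠ 1 := by
    intro k hk h1
    rw [Finset.mem_Ico] at hk
    rw [hprim.zpow_eq_one_iff_dvd] at h1
    rw [Int.dvd_neg] at h1
    have := Int.le_of_dvd (by exact_mod_cast hk.1) h1
    exact absurd (by exact_mod_cast this) (by omega)
  have hlg : ∀ k ∈ Finset.Ico 1 n, lam ≠ eps n ^ (-(k : ℤ)) := by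
    intro k hk h1
    apply hlam
    rw [h1, ← zpow_natCast, ← zpow_mul, mul_comm, zpow_mul, zpow_natCast,
      hprim.pow_eq_one]
    simp
  -- coefficients
  set a : ℕ → ℂ := fun k =>
    eps n ^ (-(k : ℤ) * r) * Cf (-(k : ℤ)) / (1 - eps n ^ (k : ℤ)) ^ p with ha
  have hded : ∀ (m : ℕ) (Q : ℂ), dedekindE H n m r p Q lam Cf
      = ∑ k ∈ Finset.Ico 1 n, a k * H p (m - 1) Q lam (eps n ^ (-(k : ℤ))) := by
    intro m Q
    unfold dedekindE
    refine Finset.sum_congr rfl fun k _ => ?_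
    rw [ha]
    ring
  -- G as a finite sum of the basic series
  have hGsum : G = ∑ k ∈ Finset.Ico 1 n, PowerSeries.C (a k) *
      PowerSeries.mk (fun m => H p m q lam (eps n ^ (-(k : ℤ))) / m.factorial) := by
    rw [hG]
    ext m
    rw [PowerSeries.coeff_mk, map_sum]
    simp only [PowerSeries.coeff_C_mul, PowerSeries.coeff_mk]
    rw [hded, Finset.sum_div]
    refine Finset.sum_congr rfl fun k _ => ?_
    simp only [Nat.add_sub_cancel]
    ring
  -- multiply by the exponential
  have hq : q + ((n : ℂ) - 1) * q = (n : ℂ) * q := by ring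
  have hmul : G * expPS (((n : ℂ) - 1) * q)
      = PowerSeries.mk (fun m => dedekindE H n (m + 1) r p ((n : ℂ) * q) lam Cf
          / m.factorial) := by
    rw [hGsum, Finset.sum_mul]
    have : ∀ k ∈ Finset.Ico 1 n,
        PowerSeries.C (a k) *
          PowerSeries.mk (fun m => H p m q lam (eps n ^ (-(k : ℤ))) / m.factorial) *
          expPS (((n : ℂ) - 1) * q)
        = PowerSeries.C (a k) *
          PowerSeries.mk (fun m => H p m ((n : ℂ) * q) lam (eps n ^ (-(k : ℤ)))
            / m.factorial) := by
      intro k hk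
      rw [mul_assoc, shiftH H hH p q (((n : ℂ) - 1) * q) lam _ (hγne1 k hk) (hlg k hk), hq]
    rw [Finset.sum_congr rfl this]
    ext m
    rw [map_sum, PowerSeries.coeff_mk]
    simp only [PowerSeries.coeff_C_mul, PowerSeries.coeff_mk]
    rw [hded, Finset.sum_div]
    refine Finset.sum_congr rfl fun k _ => ?_
    simp only [Nat.add_sub_cancel]
    ring
  rw [mul_assoc, hmul]
  ext m
  cases m with
  | zero => simp
  | succ j =>
    rw [PowerSeries.coeff_succ_X_mul, PowerSeries.coeff_mk, PowerSeries.coeff_mk]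
    rw [Nat.factorial_succ]
    push_cast
    rw [mul_div_mul_left _ _ (Nat.cast_add_one_ne_zero j)]
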